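/- arXiv:1409.2588 — 2 statements merged into one kernel-verified Lean document; each statement's English description precedes it below -/
import Mathlib

section
/- For every d ≥ 2 there exists a compact set A ⊂ ℝ^d with dim_H(A) = d such that A does not contain the vertices of any parallelogram; that is, there do not exist four pairwise distinct points a, b, c, e ∈ A with a + c = b + e. -/
/-!
In each coordinate, a point of the set is a mixed-radix expansion whose slots alternate between
*free* slots, carrying arbitrary digits, and *forced* slots, whose digit `2 ^ n` encodes, through
the number `n`, the whole prefix of free blocks before it. Every digit is below a quarter of its
base, so `a + c = b + e` holds digit by digit; at a forced slot the Sidon property of the powers of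
two then says that the prefix of `a` is that of `b` or of `e`, and letting the prefix grow gives
`a = b` or `a = e`.

The free blocks grow so fast that forced slots and padding are a vanishing proportion of all
digits. Hence the map keeping only the free digits, whose image contains the open unit cube, is
Hölder of every exponent `< 1` on the set, and the set has full dimension.
-/

open Finset Filter Function Topology
open scoped NNReal ENNReal

lemma exists_ne_forall_lt_eq {α : ℕ → Type*} {x y : ∀ n, α n} (h : x ≠ y) :
    ∃ m, x m ≠ y m ∧ ∀ k < m, x k = y k := by
  classical
  have hex := Function.ne_iff.1 h
  exact ⟨Nat.find hex, Nat.find_spec hex, fun k hk => not_not.1 (Nat.find_min hex hk)⟩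

lemma eq_or_eq_of_forall_lt_eq_or {α : ℕ → Type*} {x y z : ∀ n, α n}
    (h : ∀ n, (∀ k < n, x k = y k) ∨ (∀ k < n, x k = z k)) : x = y ∨ x = z := by
  by_contra! hne
  obtain ⟨j, hj⟩ := Function.ne_iff.1 hne.1
  obtain ⟨j', hj'⟩ := Function.ne_iff.1 hne.2
  rcases h (max j j' + 1) with h | h
  · exact hj (h j (by omega))
  · exact hj' (h j' (by omega))

lemma one_le_abs_natCast_sub {p q : ℕ} (h : p ≠ q) : 1 ≤ |(p : ℝ) - q| := by
  rw [le_abs']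
  rcases h.lt_or_gt with h | h
  · left
    have : (p : ℝ) + 1 ≤ q := by exact_mod_cast h
    linarith
  · right
    have : (q : ℝ) + 1 ≤ p := by exact_mod_cast h
    linarith

private lemma two_pow_add_two_pow_ne {a b c e : ℕ} (hac : a ≤ c) (hbe : b ≤ e) (hab : a < b) :
    2 ^ a + 2 ^ c ≠ 2 ^ b + 2 ^ e := by
  intro h
  have hdvd : 2 ^ (a + 1) ∣ 2 ^ a + 2 ^ c :=
    h ▸ dvd_add (pow_dvd_pow 2 hab) (pow_dvd_pow 2 (by omega))
  rcases hac.eq_or_lt with rfl | hac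
  · have hb : 2 ^ (a + 1) ≤ 2 ^ b := Nat.pow_le_pow_right two_pos hab
    have he : 2 ^ (a + 1) ≤ 2 ^ e := Nat.pow_le_pow_right two_pos (by omega)
    rw [pow_succ] at hb he
    omega
  · have := (Nat.dvd_add_left (pow_dvd_pow 2 hac)).1 hdvd
    exact absurd ((Nat.pow_dvd_pow_iff_le_right one_lt_two).1 this) (by omega)

theorem two_pow_add_two_pow_eq {a b c e : ℕ} (h : 2 ^ a + 2 ^ c = 2 ^ b + 2 ^ e) :
    a = b ∧ c = e ∨ a = e ∧ c = b := by
  wlog hac : a ≤ c generalizing a c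
  · have := this (a := c) (c := a) (by rwa [add_comm]) (by omega)
    tauto
  wlog hbe : b ≤ e generalizing b e
  · have := this (b := e) (e := b) (by rw [h, add_comm]) (by omega)
    tauto
  obtain rfl : a = b := by
    rcases lt_trichotomy a b with hab | rfl | hab
    · exact absurd h (two_pow_add_two_pow_ne hac hbe hab)
    · rfl
    · exact absurd h.symm (two_pow_add_two_pow_ne hbe hac hab)
  exact Or.inl ⟨rfl, Nat.pow_right_injective le_rfl (by simpa using h)⟩

/-- For cancellative addition this is the usual condition `{a, c} = {b, e}`. -/
def IsSidon {G : Type*} [Add G] (s : Set G) : Prop :=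
  ∀ a ∈ s, ∀ b ∈ s, ∀ c ∈ s, ∀ e ∈ s, a + c = b + e → a = b ∨ a = e

theorem IsSidon.image {G H F : Type*} [Add G] [Add H] [FunLike F G H] [AddHomClass F G H]
    {s : Set G} (hs : IsSidon s) {f : F} (hf : Injective f) : IsSidon (f '' s) := by
  rintro _ ⟨a, ha, rfl⟩ _ ⟨b, hb, rfl⟩ _ ⟨c, hc, rfl⟩ _ ⟨e, he, rfl⟩ h
  rw [← map_add, ← map_add] at h
  exact (hs a ha b hb c hc e he (hf h)).imp (congrArg f) (congrArg f)

theorem dimH_range_le_of_forall_dist_le_rpow {ι X Y : Type*} [MetricSpace X] [MetricSpace Y]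
    {Φ : ι → X} {Ψ : ι → Y}
    (h : ∀ r : ℝ≥0, 0 < r → r < 1 →
      ∃ C : ℝ≥0, ∀ i j, dist (Ψ i) (Ψ j) ≤ C * dist (Φ i) (Φ j) ^ (r : ℝ)) :
    dimH (Set.range Ψ) ≤ dimH (Set.range Φ) := by
  rcases isEmpty_or_nonempty ι with hι | hι
  · simp [Set.range_eq_empty]
  set g : X → Y := fun z => Ψ (invFun Φ z)
  have hg : ∀ i, g (Φ i) = Ψ i := by
    intro i
    obtain ⟨C, hC⟩ := h (1 / 2) (by norm_num) (by norm_num)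
    have := hC (invFun Φ (Φ i)) i
    rw [invFun_eq (f := Φ) ⟨i, rfl⟩, dist_self, Real.zero_rpow (by norm_num), mul_zero] at this
    exact dist_le_zero.1 this
  have hrange : Set.range Ψ = g '' Set.range Φ := by
    rw [← Set.range_comp]
    exact congrArg Set.range (funext fun i => (hg i).symm)
  rw [hrange]
  refine ENNReal.le_of_forall_lt_one_mul_le fun a ha => ?_
  lift a to ℝ≥0 using ha.ne_top
  rcases eq_or_ne a 0 with rfl | ha0
  · simp
  obtain ⟨C, hC⟩ := h a (pos_iff_ne_zero.2 ha0) (by exact_mod_cast ha)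
  have hHolder : HolderOnWith C a g (Set.range Φ) := by
    rintro _ ⟨i, rfl⟩ _ ⟨j, rfl⟩
    rw [hg, hg, edist_dist, edist_dist, ENNReal.ofReal_rpow_of_nonneg dist_nonneg a.coe_nonneg,
      ← ENNReal.ofReal_coe_nnreal, ← ENNReal.ofReal_mul C.coe_nonneg]
    exact ENNReal.ofReal_le_ofReal (hC i j)
  calc (a : ℝ≥0∞) * dimH (g '' Set.range Φ) ≤ a * (dimH (Set.range Φ) / a) := by
        gcongr
        exact hHolder.dimH_image_le (pos_iff_ne_zero.2 ha0)
    _ = dimH (Set.range Φ) := ENNReal.mul_div_cancel (by simpa using ha0) ENNReal.coe_ne_top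

/-- With `P = 2 ^ prefixBits d j`, `Q = 2 ^ freeBits d j`, `R = 2 ^ overheadBits d j` this compares
the bounds on the two distances in the Hölder estimate. -/
lemma add_one_div_le_mul_rpow {P Q R C α δ : ℝ} (hP : 0 < P) (hR : 0 < R) (hα : α ≤ 1)
    (hδ : 1 ≤ δ) (hδQ : δ ≤ Q) (hC : (P * R) ^ α ≤ C * P) :
    (δ + 1) / (P * Q) ≤ 4 * C * (3 / 4 * δ / (P * Q * R)) ^ α := by
  have hQ : 0 < Q := by linarith
  have hu : 0 < δ / Q := by positivity
  have hPR : 0 < (P * R) ^ α := by positivity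
  have hCpos : 0 < C := pos_of_mul_pos_left (hPR.trans_le hC) hP.le
  have hsplit : (3 / 4 * δ / (P * Q * R)) ^ α = (3 / 4) ^ α * (δ / Q) ^ α / (P * R) ^ α := by
    rw [show 3 / 4 * δ / (P * Q * R) = 3 / 4 * (δ / Q) / (P * R) by field_simp,
      Real.div_rpow (by positivity) (by positivity), Real.mul_rpow (by norm_num) hu.le]
  have h34 : (3 / 4 : ℝ) ≤ (3 / 4) ^ α := by
    simpa using Real.rpow_le_rpow_of_exponent_ge (by norm_num : (0 : ℝ) < 3 / 4) (by norm_num) hα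
  have hδα : δ / Q ≤ (δ / Q) ^ α := by
    simpa using Real.rpow_le_rpow_of_exponent_ge hu ((div_le_one hQ).2 hδQ) hα
  rw [hsplit]
  calc (δ + 1) / (P * Q) ≤ 4 * C * (3 / 4 * (δ / Q) / (C * P)) := by
        rw [div_le_iff₀ (by positivity)]
        field_simp
        nlinarith
    _ ≤ 4 * C * ((3 / 4) ^ α * (δ / Q) ^ α / (P * R) ^ α) := by gcongr

lemma two_pow_mul_two_pow_rpow_le {n F Δ K : ℕ} {α : ℝ} (hα : α * (n + 1) ≤ n)
    (h : n * Δ ≤ F + K) : ((2 : ℝ) ^ F * 2 ^ Δ) ^ α ≤ 2 ^ K * 2 ^ F := by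
  rw [← pow_add, ← pow_add, ← Real.rpow_natCast, ← Real.rpow_natCast,
    ← Real.rpow_mul zero_le_two]
  refine Real.rpow_le_rpow_of_exponent_le one_le_two ?_
  have h' : (n : ℝ) * Δ ≤ F + K := by exact_mod_cast h
  have : (F + Δ : ℝ) * α * (n + 1) ≤ (K + F) * (n + 1) := by
    nlinarith [mul_le_mul_of_nonneg_left hα (by positivity : (0 : ℝ) ≤ F + Δ)]
  push_cast
  exact le_of_mul_le_mul_right this (by positivity)

def interleave {α : Type*} (f g : ℕ → α) (k : ℕ) : α :=
  if Even k then f (k / 2) else g (k / 2)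

@[simp] lemma interleave_two_mul {α : Type*} (f g : ℕ → α) (j : ℕ) :
    interleave f g (2 * j) = f j := by
  simp [interleave]

@[simp] lemma interleave_two_mul_add_one {α : Type*} (f g : ℕ → α) (j : ℕ) :
    interleave f g (2 * j + 1) = g j := by
  simp [interleave, show (2 * j + 1) / 2 = j by omega]

noncomputable section

namespace MixedRadix

def scale (M : ℕ → ℕ) (k : ℕ) : ℝ := ∏ l ∈ range k, (M l : ℝ)

def val (M : ℕ → ℕ) (a : ℕ → ℕ) : ℝ := ∑' k, (a k : ℝ) / scale M (k + 1)

variable {M : ℕ → ℕ}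

lemma scale_zero : scale M 0 = 1 := prod_range_zero _

lemma scale_succ (k : ℕ) : scale M (k + 1) = scale M k * M k := prod_range_succ _ _

variable (hM : ∀ k, 2 ≤ M k)
include hM

lemma scale_pos (k : ℕ) : 0 < scale M k :=
  prod_pos fun l _ => by have := hM l; positivity

lemma tendsto_inv_scale : Tendsto (fun k => (scale M k)⁻¹) atTop (𝓝 0) := by
  refine Tendsto.inv_tendsto_atTop (tendsto_atTop_mono (fun k => ?_)
    (tendsto_pow_atTop_atTop_of_one_lt (one_lt_two (α := ℝ))))
  calc (2 : ℝ) ^ k = ∏ _l ∈ range k, (2 : ℝ) := by simp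
    _ ≤ scale M k := prod_le_prod (fun _ _ => zero_le_two) fun l _ => by exact_mod_cast hM l

lemma hasSum_tail (n : ℕ) :
    HasSum (fun k => ((M (k + n) : ℝ) - 1) / scale M (k + n + 1)) (scale M n)⁻¹ := by
  have hterm : ∀ k, ((M (k + n) : ℝ) - 1) / scale M (k + n + 1) =
      (scale M (k + n))⁻¹ - (scale M (k + 1 + n))⁻¹ := by
    intro k
    have := scale_pos hM (k + n)
    have : (0 : ℝ) < M (k + n) := by have := hM (k + n); positivity
    rw [show k + 1 + n = k + n + 1 by ring, scale_succ]
    field_simp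
  have hnonneg : ∀ k, 0 ≤ ((M (k + n) : ℝ) - 1) / scale M (k + n + 1) := by
    intro k
    have : (2 : ℝ) ≤ M (k + n) := by exact_mod_cast hM (k + n)
    exact div_nonneg (by linarith) (scale_pos hM _).le
  rw [hasSum_iff_tendsto_nat_of_nonneg hnonneg]
  simp only [hterm, sum_range_sub' (fun k => (scale M (k + n))⁻¹), zero_add]
  simpa using (tendsto_inv_scale hM).comp (tendsto_add_atTop_nat n) |>.const_sub (scale M n)⁻¹

variable {a b : ℕ → ℕ} {c : ℝ}

lemma summable (ha : ∀ k, (a k : ℝ) ≤ c * (M k - 1)) :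
    Summable fun k => (a k : ℝ) / scale M (k + 1) := by
  have := ((hasSum_tail hM 0).mul_left c).summable
  simp only [add_zero] at this
  refine this.of_nonneg_of_le (fun k => by have := scale_pos hM (k + 1); positivity) fun k => ?_
  rw [mul_div_assoc']
  exact div_le_div_of_nonneg_right (ha k) (scale_pos hM _).le

lemma val_add (ha : ∀ k, (a k : ℝ) ≤ c * (M k - 1))
    (hb : ∀ k, (b k : ℝ) ≤ c * (M k - 1)) :
    val M (a + b) = val M a + val M b := by
  rw [val, val, val, ← (summable hM ha).tsum_add (summable hM hb)]
  simp [add_div]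

theorem abs_val_sub_sub_le (ha : ∀ k, (a k : ℝ) ≤ c * (M k - 1))
    (hb : ∀ k, (b k : ℝ) ≤ c * (M k - 1)) {m : ℕ} (hab : ∀ k < m, a k = b k) :
    |val M a - val M b - ((a m : ℝ) - b m) / scale M (m + 1)| ≤ c / scale M (m + 1) := by
  set f : ℕ → ℝ := fun k => ((a k : ℝ) - b k) / scale M (k + 1)
  have hf : Summable f := by simpa only [f, sub_div] using (summable hM ha).sub (summable hM hb)
  have hval : val M a - val M b = ∑' k, f k := by
    rw [val, val, ← (summable hM ha).tsum_sub (summable hM hb)]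
    simp only [f, sub_div]
  have hhead : ∑ k ∈ range (m + 1), f k = f m := by
    rw [sum_range_succ, sum_eq_zero fun k hk => by simp [f, hab k (mem_range.1 hk)], zero_add]
  rw [hval, ← hf.sum_add_tsum_nat_add (m + 1), hhead, add_sub_cancel_left, ← Real.norm_eq_abs]
  refine tsum_of_norm_bounded ((hasSum_tail hM (m + 1)).mul_left c) fun k => ?_
  rw [Real.norm_eq_abs, abs_div, abs_of_pos (scale_pos hM _), mul_div_assoc']
  exact div_le_div_of_nonneg_right (abs_sub_le_of_nonneg_of_le (Nat.cast_nonneg _) (ha _)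
    (Nat.cast_nonneg _) (hb _)) (scale_pos hM _).le

lemma le_abs_val_sub (ha : ∀ k, (a k : ℝ) ≤ c * (M k - 1))
    (hb : ∀ k, (b k : ℝ) ≤ c * (M k - 1)) {m : ℕ} (hab : ∀ k < m, a k = b k) :
    (|(a m : ℝ) - b m| - c) / scale M (m + 1) ≤ |val M a - val M b| := by
  have h := abs_val_sub_sub_le hM ha hb hab
  have := abs_sub_abs_le_abs_sub (((a m : ℝ) - b m) / scale M (m + 1)) (val M a - val M b)
  rw [abs_sub_comm (((a m : ℝ) - b m) / _), abs_div, abs_of_pos (scale_pos hM _)] at this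
  rw [sub_div]
  linarith

lemma abs_val_sub_le (ha : ∀ k, (a k : ℝ) ≤ c * (M k - 1))
    (hb : ∀ k, (b k : ℝ) ≤ c * (M k - 1)) {m : ℕ} (hab : ∀ k < m, a k = b k) :
    |val M a - val M b| ≤ (|(a m : ℝ) - b m| + c) / scale M (m + 1) := by
  have h := abs_val_sub_sub_le hM ha hb hab
  have := abs_sub_abs_le_abs_sub (val M a - val M b) (((a m : ℝ) - b m) / scale M (m + 1))
  rw [abs_div, abs_of_pos (scale_pos hM _)] at this
  rw [add_div]
  linarith

theorem eq_of_val_eq (hc : c < 1) (ha : ∀ k, (a k : ℝ) ≤ c * (M k - 1))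
    (hb : ∀ k, (b k : ℝ) ≤ c * (M k - 1)) (h : val M a = val M b) : a = b := by
  by_contra hne
  obtain ⟨m, hm, hab⟩ := exists_ne_forall_lt_eq hne
  have hle := le_abs_val_sub hM ha hb hab
  rw [h, sub_self, abs_zero, div_nonpos_iff] at hle
  have := one_le_abs_natCast_sub hm
  have := scale_pos hM (m + 1)
  rcases hle with ⟨-, h1⟩ | ⟨h1, -⟩ <;> linarith

theorem continuous_val {T : Type*} [TopologicalSpace T] {a : T → ℕ → ℕ}
    (hcont : ∀ k, Continuous fun t => (a t k : ℝ))
    (ha : ∀ t k, (a t k : ℝ) ≤ c * (M k - 1)) :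
    Continuous fun t => val M (a t) := by
  have hsum := ((hasSum_tail hM 0).mul_left c).summable
  simp only [add_zero] at hsum
  refine continuous_tsum (fun k => (hcont k).div_const _) hsum fun k t => ?_
  rw [Real.norm_eq_abs, abs_of_nonneg (by have := scale_pos hM (k + 1); positivity),
    mul_div_assoc']
  exact div_le_div_of_nonneg_right (ha t k) (scale_pos hM _).le

lemma mul_floor_le_floor_mul_scale_succ {y : ℝ} (hy : 0 ≤ y) (k : ℕ) :
    M k * ⌊y * scale M k⌋₊ ≤ ⌊y * scale M (k + 1)⌋₊ := by
  refine Nat.le_floor ?_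
  have := Nat.floor_le (mul_nonneg hy (scale_pos hM k).le)
  rw [scale_succ]
  push_cast
  nlinarith [(by positivity : (0 : ℝ) ≤ M k)]

lemma floor_mul_scale_succ_lt {y : ℝ} (hy : 0 ≤ y) (k : ℕ) :
    ⌊y * scale M (k + 1)⌋₊ < M k * ⌊y * scale M k⌋₊ + M k := by
  refine (Nat.floor_lt (mul_nonneg hy (scale_pos hM _).le)).2 ?_
  have := Nat.lt_floor_add_one (y * scale M k)
  have : (0 : ℝ) < M k := by have := hM k; positivity
  rw [scale_succ]
  push_cast
  nlinarith

/-- The digits are chosen so that the partial sums are `⌊y * scale M n⌋₊ / scale M n`. -/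
theorem exists_val_eq {y : ℝ} (hy : y ∈ Set.Ico 0 1) :
    ∃ a : ℕ → ℕ, (∀ k, a k < M k) ∧ val M a = y := by
  set F : ℕ → ℕ := fun k => ⌊y * scale M k⌋₊
  have hF_le : ∀ k, M k * F k ≤ F (k + 1) := mul_floor_le_floor_mul_scale_succ hM hy.1
  have hF_lt : ∀ k, F (k + 1) < M k * F k + M k := floor_mul_scale_succ_lt hM hy.1
  have hW := scale_pos hM
  refine ⟨fun k => F (k + 1) - M k * F k, fun k => by
    have := hF_le k; have := hF_lt k; dsimp only; omega, ?_⟩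
  have hterm : ∀ k, ((F (k + 1) - M k * F k : ℕ) : ℝ) / scale M (k + 1) =
      F (k + 1) / scale M (k + 1) - F k / scale M k := by
    intro k
    have := hW k
    have : (0 : ℝ) < M k := by have := hM k; positivity
    rw [Nat.cast_sub (hF_le k), scale_succ]
    field_simp
    push_cast
    ring
  have hF0 : F 0 = 0 := Nat.floor_eq_zero.2 (by simpa [scale_zero] using hy.2)
  have hconv : Tendsto (fun n => (F n : ℝ) / scale M n) atTop (𝓝 y) := by
    refine tendsto_of_tendsto_of_tendsto_of_le_of_le (g := fun n => y - (scale M n)⁻¹)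
      (by simpa using (tendsto_inv_scale hM).const_sub y) tendsto_const_nhds (fun n => ?_)
      fun n => (div_le_iff₀ (hW n)).2 (Nat.floor_le (mul_nonneg hy.1 (hW n).le))
    have := Nat.lt_floor_add_one (y * scale M n)
    rw [le_div_iff₀ (hW n), sub_mul, inv_mul_cancel₀ (hW n).ne']
    linarith
  refine HasSum.tsum_eq ((hasSum_iff_tendsto_nat_of_nonneg
    (fun k => div_nonneg (Nat.cast_nonneg _) (hW _).le) y).2 ?_)
  simpa [hterm, sum_range_sub (fun k => (F k : ℝ) / scale M k), hF0] using hconv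

end MixedRadix

namespace SidonCantor

variable (d : ℕ)

/-- The recursion inlines `freeBits d j`, see `prefixBits_succ`. -/
def prefixBits : ℕ → ℕ
  | 0 => 0
  | j + 1 => prefixBits j + (j + 2) ^ 3 * (2 ^ (d * prefixBits j) + 2)

def forcedBits (ν : ℕ) : ℕ := 2 ^ (d * prefixBits d ν) + 2

def freeBits (j : ℕ) : ℕ := (j + 2) ^ 3 * forcedBits d j

/-- The bits of the slots `0, …, 2 j` not spent on free digits: two per free slot, and the
forced slots. -/
def overheadBits (j : ℕ) : ℕ := 2 * (j + 1) + ∑ ν ∈ range j, forcedBits d ν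

lemma prefixBits_succ (j : ℕ) : prefixBits d (j + 1) = prefixBits d j + freeBits d j := rfl

lemma prefixBits_eq_sum (j : ℕ) : prefixBits d j = ∑ m ∈ range j, freeBits d m := by
  induction j with
  | zero => rfl
  | succ j ih => rw [prefixBits_succ, ih, sum_range_succ]

lemma two_le_forcedBits (ν : ℕ) : 2 ≤ forcedBits d ν := Nat.le_add_left _ _

lemma forcedBits_mono : Monotone (forcedBits d) := by
  have : Monotone (prefixBits d) := monotone_nat_of_le_succ fun j => Nat.le_add_right _ _
  exact fun ν ν' h => Nat.add_le_add_right (Nat.pow_le_pow_right two_pos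
    (Nat.mul_le_mul_left d (this h))) 2

lemma succ_mul_overheadBits_succ_le (m : ℕ) :
    (m + 1) * overheadBits d (m + 1) ≤ freeBits d m := by
  have hsum : ∑ ν ∈ range (m + 1), forcedBits d ν ≤ (m + 1) * forcedBits d m := by
    simpa using sum_le_card_nsmul (range (m + 1)) (forcedBits d) _
      fun ν hν => forcedBits_mono d (Nat.lt_succ_iff.1 (mem_range.1 hν))
  have := two_le_forcedBits d m
  rw [overheadBits, freeBits]
  calc (m + 1) * (2 * (m + 1 + 1) + ∑ ν ∈ range (m + 1), forcedBits d ν)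
      ≤ (m + 1) * (2 * (m + 2) * forcedBits d m) := by gcongr; nlinarith
    _ = (m + 1) * (2 * (m + 2)) * forcedBits d m := by ring
    _ ≤ (m + 2) ^ 3 * forcedBits d m := by gcongr; ring_nf; nlinarith

lemma mul_overheadBits_le (n j : ℕ) :
    n * overheadBits d j ≤ prefixBits d j + n * overheadBits d n := by
  rcases le_or_gt j n with hjn | hnj
  · have : overheadBits d j ≤ overheadBits d n := by
      unfold overheadBits
      gcongr
    nlinarith
  · obtain ⟨m, rfl⟩ : ∃ m, j = m + 1 := ⟨j - 1, by omega⟩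
    have := succ_mul_overheadBits_succ_le d m
    have : n * overheadBits d (m + 1) ≤ (m + 1) * overheadBits d (m + 1) :=
      Nat.mul_le_mul_right _ (by omega)
    rw [prefixBits_succ]
    omega

abbrev Param := ∀ j : ℕ, Fin d → Fin (2 ^ freeBits d j)

abbrev Prefix (ν : ℕ) := ∀ m : Fin ν, Fin d → Fin (2 ^ freeBits d m)

lemma card_prefix (ν : ℕ) : Fintype.card (Prefix d ν) = 2 ^ (d * prefixBits d ν) := by
  simp only [Fintype.card_pi, Fintype.card_fin, prod_const, card_univ, ← pow_mul,
    prod_pow_eq_pow_sum, mul_comm]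
  rw [Fin.sum_univ_eq_sum_range (fun m => d * freeBits d m), ← mul_sum, prefixBits_eq_sum]

def prefixCode (ν : ℕ) (x : Param d) : ℕ := Fintype.equivFin (Prefix d ν) fun m => x m

def slotBase : ℕ → ℕ :=
  interleave (fun j => 2 ^ (freeBits d j + 2)) fun ν => 2 ^ forcedBits d ν

def freeBase (j : ℕ) : ℕ := 2 ^ freeBits d j

def digit (x : Param d) (i : Fin d) : ℕ → ℕ :=
  interleave (fun j => x j i) fun ν => 2 ^ prefixCode d ν x

def sidonMap (x : Param d) : Fin d → ℝ := fun i => MixedRadix.val (slotBase d) (digit d x i)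

def cubeMap (x : Param d) : Fin d → ℝ := fun i => MixedRadix.val (freeBase d) fun j => x j i

lemma two_le_slotBase (k : ℕ) : 2 ≤ slotBase d k := by
  obtain ⟨j, rfl | rfl⟩ := Nat.even_or_odd' k <;>
    simp only [slotBase, interleave_two_mul, interleave_two_mul_add_one] <;>
    exact Nat.le_self_pow (by have := two_le_forcedBits d j; omega) 2

lemma two_le_freeBase (j : ℕ) : 2 ≤ freeBase d j :=
  Nat.le_self_pow (by have := two_le_forcedBits d j; unfold freeBits; positivity) 2

lemma scale_freeBase (j : ℕ) : MixedRadix.scale (freeBase d) j = 2 ^ prefixBits d j := by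
  induction j with
  | zero => simp [MixedRadix.scale_zero, prefixBits]
  | succ j ih =>
    rw [MixedRadix.scale_succ, ih, prefixBits_succ, freeBase]
    push_cast
    ring

lemma scale_slotBase (j : ℕ) :
    MixedRadix.scale (slotBase d) (2 * j + 1) = 2 ^ (prefixBits d (j + 1) + overheadBits d j) := by
  induction j with
  | zero =>
    have : slotBase d 0 = 2 ^ (freeBits d 0 + 2) := interleave_two_mul _ _ 0
    simp only [mul_zero, zero_add, MixedRadix.scale_succ, MixedRadix.scale_zero, one_mul, this,
      prefixBits_succ, overheadBits, range_zero, sum_empty]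
    push_cast
    rfl
  | succ j ih =>
    rw [show 2 * (j + 1) + 1 = 2 * j + 1 + 1 + 1 by ring, MixedRadix.scale_succ,
      MixedRadix.scale_succ, ih, show 2 * j + 1 + 1 = 2 * (j + 1) by ring,
      prefixBits_succ d (j + 1)]
    simp only [slotBase, interleave_two_mul, interleave_two_mul_add_one, overheadBits,
      sum_range_succ]
    push_cast
    ring

variable {d}

lemma prefixCode_lt (ν : ℕ) (x : Param d) : prefixCode d ν x < 2 ^ (d * prefixBits d ν) :=
  card_prefix d ν ▸ (Fintype.equivFin _ _).isLt

lemma prefixCode_eq_iff {ν : ℕ} {x y : Param d} :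
    prefixCode d ν x = prefixCode d ν y ↔ ∀ m < ν, x m = y m := by
  rw [prefixCode, prefixCode, Fin.val_inj, (Fintype.equivFin _).injective.eq_iff, funext_iff]
  exact ⟨fun h m hm => h ⟨m, hm⟩, fun h m => h m m.2⟩

lemma four_mul_digit_add_one_le (x : Param d) (i : Fin d) (k : ℕ) :
    4 * digit d x i k + 1 ≤ slotBase d k := by
  obtain ⟨j, rfl | rfl⟩ := Nat.even_or_odd' k
  · simp only [digit, slotBase, interleave_two_mul, pow_add]
    have := (x j i).isLt
    omega
  · simp only [digit, slotBase, interleave_two_mul_add_one, forcedBits]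
    set T := 2 ^ (d * prefixBits d j)
    have hcode : 2 ^ (prefixCode d j x + 2) ≤ 2 ^ (T + 1) :=
      Nat.pow_le_pow_right two_pos (by have := prefixCode_lt j x; omega)
    have : 2 ^ (prefixCode d j x + 2) = 4 * 2 ^ prefixCode d j x := by ring
    have : 2 ^ (T + 2) = 2 * 2 ^ (T + 1) := by ring
    have : 1 ≤ 2 ^ (T + 1) := Nat.one_le_two_pow
    omega

lemma digit_le (x : Param d) (i : Fin d) (k : ℕ) :
    (digit d x i k : ℝ) ≤ 4⁻¹ * (slotBase d k - 1) := by
  have : (4 * digit d x i k + 1 : ℝ) ≤ slotBase d k := by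
    exact_mod_cast four_mul_digit_add_one_le x i k
  linarith

lemma coe_le_freeBase (x : Param d) (i : Fin d) (j : ℕ) :
    ((x j i : ℕ) : ℝ) ≤ 1 * (freeBase d j - 1) := by
  have : ((x j i : ℕ) + 1 : ℝ) ≤ freeBase d j := by exact_mod_cast (x j i).isLt
  linarith

lemma digit_eq_of_forall_lt_eq {x y : Param d} {j₀ : ℕ} (h : ∀ j < j₀, x j = y j)
    (i : Fin d) {k : ℕ} (hk : k < 2 * j₀) : digit d x i k = digit d y i k := by
  obtain ⟨j, rfl | rfl⟩ := Nat.even_or_odd' k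
  · simp [digit, h j (by omega)]
  · simp only [digit, interleave_two_mul_add_one]
    rw [prefixCode_eq_iff.2 fun m hm => h m (by omega)]

lemma continuous_digit (i : Fin d) (k : ℕ) :
    Continuous fun x : Param d => (digit d x i k : ℝ) := by
  obtain ⟨j, rfl | rfl⟩ := Nat.even_or_odd' k
  · simp only [digit, interleave_two_mul]
    exact (continuous_of_discreteTopology
      (f := fun v : Fin d → Fin (2 ^ freeBits d j) => ((v i : ℕ) : ℝ))).comp
      (continuous_apply j)
  · simp only [digit, interleave_two_mul_add_one, prefixCode]
    exact (continuous_of_discreteTopology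
      (f := fun p : Prefix d j => ((2 ^ (Fintype.equivFin _ p : ℕ) : ℕ) : ℝ))).comp
      (continuous_pi fun m : Fin j => continuous_apply (m : ℕ))

lemma continuous_sidonMap : Continuous (sidonMap d) :=
  continuous_pi fun i => MixedRadix.continuous_val (two_le_slotBase d) (continuous_digit i)
    fun x => digit_le x i

lemma digit_add_digit_eq {xa xb xc xe : Param d}
    (h : sidonMap d xa + sidonMap d xc = sidonMap d xb + sidonMap d xe) (i : Fin d) :
    digit d xa i + digit d xc i = digit d xb i + digit d xe i := by
  have hsum : ∀ x y : Param d, ∀ k,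
      ((digit d x i + digit d y i) k : ℝ) ≤ 2⁻¹ * (slotBase d k - 1) := by
    intro x y k
    push_cast [Pi.add_apply]
    linarith [digit_le x i k, digit_le y i k]
  refine MixedRadix.eq_of_val_eq (two_le_slotBase d) (by norm_num) (hsum xa xc) (hsum xb xe) ?_
  rw [MixedRadix.val_add (two_le_slotBase d) (digit_le xa i) (digit_le xc i),
    MixedRadix.val_add (two_le_slotBase d) (digit_le xb i) (digit_le xe i)]
  exact congrFun h i

theorem isSidon_range_sidonMap (hd : 0 < d) : IsSidon (Set.range (sidonMap d)) := by
  rintro _ ⟨xa, rfl⟩ _ ⟨xb, rfl⟩ _ ⟨xc, rfl⟩ _ ⟨xe, rfl⟩ h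
  suffices xa = xb ∨ xa = xe by rcases this with rfl | rfl <;> simp
  refine eq_or_eq_of_forall_lt_eq_or fun ν => ?_
  have hν := congrFun (digit_add_digit_eq h ⟨0, hd⟩) (2 * ν + 1)
  simp only [Pi.add_apply, digit, interleave_two_mul_add_one] at hν
  rcases two_pow_add_two_pow_eq hν with ⟨hab, -⟩ | ⟨hae, -⟩
  exacts [Or.inl (prefixCode_eq_iff.1 hab), Or.inr (prefixCode_eq_iff.1 hae)]

lemma le_dist_sidonMap {x y : Param d} {j : ℕ} (h : ∀ j' < j, x j' = y j') {i : Fin d}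
    (hi : x j i ≠ y j i) :
    3 / 4 * |((x j i : ℕ) : ℝ) - (y j i : ℕ)| /
        2 ^ (prefixBits d (j + 1) + overheadBits d j) ≤ dist (sidonMap d x) (sidonMap d y) := by
  have hδ := one_le_abs_natCast_sub (Fin.val_injective.ne hi)
  have hlow := MixedRadix.le_abs_val_sub (two_le_slotBase d) (digit_le x i) (digit_le y i)
    (m := 2 * j) fun k hk => digit_eq_of_forall_lt_eq h i hk
  rw [digit, digit, interleave_two_mul, interleave_two_mul, scale_slotBase] at hlow
  calc _ ≤ (|((x j i : ℕ) : ℝ) - (y j i : ℕ)| - 4⁻¹) /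
        2 ^ (prefixBits d (j + 1) + overheadBits d j) := by
        gcongr
        linarith
    _ ≤ |sidonMap d x i - sidonMap d y i| := hlow
    _ ≤ dist (sidonMap d x) (sidonMap d y) :=
        (Real.dist_eq _ _).symm.trans_le (dist_le_pi_dist _ _ i)

lemma dist_cubeMap_le {x y : Param d} {j : ℕ} (h : ∀ j' < j, x j' = y j') {δ : ℝ}
    (hδ0 : 0 ≤ δ) (hδ : ∀ i, |((x j i : ℕ) : ℝ) - (y j i : ℕ)| ≤ δ) :
    dist (cubeMap d x) (cubeMap d y) ≤ (δ + 1) / 2 ^ prefixBits d (j + 1) := by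
  refine (dist_pi_le_iff (by positivity)).2 fun i => ?_
  rw [Real.dist_eq, ← scale_freeBase]
  calc _ ≤ (|((x j i : ℕ) : ℝ) - (y j i : ℕ)| + 1) /
        MixedRadix.scale (freeBase d) (j + 1) :=
        MixedRadix.abs_val_sub_le (two_le_freeBase d) (coe_le_freeBase x i) (coe_le_freeBase y i)
          fun k hk => by rw [h k hk]
    _ ≤ _ := by
        gcongr
        exacts [(MixedRadix.scale_pos (two_le_freeBase d) _).le, hδ i]

/-- Compare the free digits and the full expansions at the first block `j` where `x` and `y`
differ, in the coordinate where their digits differ most. -/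
theorem dist_cubeMap_le_rpow (n : ℕ) {α : ℝ} (hα0 : 0 ≤ α) (hα : α * (n + 1) ≤ n)
    (x y : Param d) :
    dist (cubeMap d x) (cubeMap d y) ≤
      4 * 2 ^ (n * overheadBits d n) * dist (sidonMap d x) (sidonMap d y) ^ α := by
  rcases eq_or_ne x y with rfl | hxy
  · simp only [dist_self]
    positivity
  obtain ⟨j, hj, h⟩ := exists_ne_forall_lt_eq hxy
  obtain ⟨i, hi⟩ := Function.ne_iff.1 hj
  set δ : Fin d → ℝ := fun i => |((x j i : ℕ) : ℝ) - (y j i : ℕ)|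
  obtain ⟨i₀, -, hi₀⟩ := exists_max_image univ δ ⟨i, mem_univ i⟩
  have hδ1 : 1 ≤ δ i₀ :=
    (one_le_abs_natCast_sub (Fin.val_injective.ne hi)).trans (hi₀ i (mem_univ i))
  have hi₀ne : x j i₀ ≠ y j i₀ := fun he => by norm_num [δ, he] at hδ1
  have hδQ : δ i₀ ≤ 2 ^ freeBits d j := by
    have := abs_sub_le_of_nonneg_of_le (Nat.cast_nonneg _) (coe_le_freeBase x i₀ j)
      (Nat.cast_nonneg _) (coe_le_freeBase y i₀ j)
    simp only [freeBase] at this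
    push_cast at this
    linarith
  calc dist (cubeMap d x) (cubeMap d y)
      ≤ (δ i₀ + 1) / (2 ^ prefixBits d j * 2 ^ freeBits d j) := by
        rw [← pow_add, ← prefixBits_succ]
        exact dist_cubeMap_le h (by linarith) fun i => hi₀ i (mem_univ i)
    _ ≤ 4 * 2 ^ (n * overheadBits d n) *
        (3 / 4 * δ i₀ / (2 ^ prefixBits d j * 2 ^ freeBits d j * 2 ^ overheadBits d j)) ^ α :=
        add_one_div_le_mul_rpow (by positivity) (by positivity) (by nlinarith) hδ1 hδQ
          (two_pow_mul_two_pow_rpow_le hα (mul_overheadBits_le d n j))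
    _ ≤ _ := by
        gcongr
        rw [← pow_add, ← pow_add, ← prefixBits_succ]
        exact le_dist_sidonMap h hi₀ne

variable (d)

lemma pi_Ioo_subset_range_cubeMap :
    Set.pi Set.univ (fun _ => Set.Ioo (0 : ℝ) 1) ⊆ Set.range (cubeMap d) := by
  intro z hz
  choose a ha hval using fun i => MixedRadix.exists_val_eq (two_le_freeBase d)
    (Set.Ioo_subset_Ico_self (hz i (Set.mem_univ i)))
  exact ⟨fun j i => ⟨a i j, ha i j⟩, funext hval⟩

theorem dimH_range_sidonMap : dimH (Set.range (sidonMap d)) = d := by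
  refine le_antisymm ((dimH_mono (Set.subset_univ _)).trans_eq (Real.dimH_univ_pi_fin d)) ?_
  calc (d : ℝ≥0∞) = dimH (Set.pi Set.univ fun _ : Fin d => Set.Ioo (0 : ℝ) 1) := by
        rw [Real.dimH_of_nonempty_interior, Module.finrank_fin_fun]
        rw [(isOpen_set_pi Set.finite_univ fun _ _ => isOpen_Ioo).interior_eq]
        exact ⟨fun _ => 1 / 2, fun _ _ => by norm_num⟩
    _ ≤ dimH (Set.range (cubeMap d)) := dimH_mono (pi_Ioo_subset_range_cubeMap d)
    _ ≤ dimH (Set.range (sidonMap d)) := dimH_range_le_of_forall_dist_le_rpow fun r _ hr => by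
        obtain ⟨n, hn⟩ := exists_nat_ge ((r : ℝ) / (1 - r))
        have hr1 : (0 : ℝ) < 1 - r := sub_pos.2 (by exact_mod_cast hr)
        refine ⟨4 * 2 ^ (n * overheadBits d n), fun x y => ?_⟩
        push_cast
        refine dist_cubeMap_le_rpow n r.coe_nonneg ?_ x y
        rw [div_le_iff₀ hr1] at hn
        linarith

end SidonCantor

end

/-- Maga. For every `d ≥ 2` there is a compact set `A ⊆ ℝ^d` of full
Hausdorff dimension `d` containing no four pairwise distinct points `a, b, c, e` with
`a + c = b + e` (the vertices of a parallelogram). -/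
theorem exists_full_dimensional_set_without_parallelograms (d : ℕ) (hd : 2 ≤ d) :
    ∃ A : Set (EuclideanSpace ℝ (Fin d)), IsCompact A ∧ dimH A = (d : ℝ≥0∞) ∧
      ¬ ∃ a b c e : EuclideanSpace ℝ (Fin d),
        a ∈ A ∧ b ∈ A ∧ c ∈ A ∧ e ∈ A ∧
        a ≠ b ∧ a ≠ c ∧ a ≠ e ∧ b ≠ c ∧ b ≠ e ∧ c ≠ e ∧
        a + c = b + e := by
  set L := (EuclideanSpace.equiv (Fin d) ℝ).symm
  refine ⟨L '' Set.range (SidonCantor.sidonMap d),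
    (isCompact_range SidonCantor.continuous_sidonMap).image L.continuous,
    by rw [L.dimH_image, SidonCantor.dimH_range_sidonMap], ?_⟩
  rintro ⟨a, b, c, e, ha, hb, hc, he, hab, -, hae, -, -, -, h⟩
  rcases (SidonCantor.isSidon_range_sidonMap (by omega)).image L.injective a ha b hb c hc e he h
    with rfl | rfl
  exacts [hab rfl, hae rfl]
end

section
/- Let μ be a compactly supported Borel probability measure on ℝ^d such that μ(B(x,r)) ≤ C r^s for all x ∈ ℝ^d and r > 0, where 0 < s ≤ d. Then there exists a constant C′ (depending only on d, s and C) such that for every R ≥ 1, ∫_{|ξ| ≤ R} |μ̂(ξ)|² dξ ≤ C′ R^{d−s}. -/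
/-!
Weight `|μ̂|²` by the Gaussian `e^{-π|ξ|²/R²}`, which is at least `e^{-π}` on the ball of radius
`R`. Expanding `|μ̂(ξ)|² = ∬ e^{-2πi(x-y)·ξ} dμ(x) dμ(y)` and integrating the Gaussian first gives
`∫ |μ̂(ξ)|² e^{-π|ξ|²/R²} dξ = R^d ∬ e^{-πR²|x-y|²} dμ(x) dμ(y)`. The Frostman condition bounds each
inner integral by layer cake: the set where `e^{-πR²|x-y|²} > t` is the ball around `x` of radius
`√(log(1/t)/(πR²))`, of `μ`-measure `≲ R^{-s} t^{-1/2}`, and `t^{-1/2}` is integrable on `(0, 1]`.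
-/

open MeasureTheory Set Metric
open scoped ENNReal RealInnerProductSpace

/-- The Fourier transform `μ̂(ξ) = ∫ e^{-2πi x·ξ} dμ(x)` of a measure on `ℝ^d`. -/
noncomputable def fourierMeasure {d : ℕ} (μ : Measure (EuclideanSpace ℝ (Fin d)))
    (ξ : EuclideanSpace ℝ (Fin d)) : ℂ :=
  ∫ x, Complex.exp (-(2 * Real.pi * ⟪x, ξ⟫) * Complex.I) ∂μ

open Real

lemma rpow_le_mul_exp_div_two {p u : ℝ} (hp : 0 < p) (hu : 0 ≤ u) :
    u ^ p ≤ (2 * p) ^ p * exp (u / 2) := by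
  have h2p : 0 < 2 * p := by positivity
  calc u ^ p = (2 * p) ^ p * (u / (2 * p)) ^ p := by
        rw [← mul_rpow h2p.le (by positivity), mul_div_cancel₀ _ h2p.ne']
    _ ≤ (2 * p) ^ p * exp (u / (2 * p)) ^ p := by
        gcongr
        linarith [add_one_le_exp (u / (2 * p))]
    _ = (2 * p) ^ p * exp (u / 2) := by
        rw [← exp_mul]
        field_simp

lemma lintegral_Ioc_zero_one_rpow_neg_half :
    ∫⁻ t in Ioc (0 : ℝ) 1, ENNReal.ofReal (t ^ (-(1 / 2) : ℝ)) = 2 := by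
  have hint : IntegrableOn (fun t : ℝ ↦ t ^ (-(1 / 2) : ℝ)) (Ioc 0 1) := by
    rw [← intervalIntegrable_iff_integrableOn_Ioc_of_le zero_le_one]
    exact intervalIntegral.intervalIntegrable_rpow' (by norm_num)
  rw [← ofReal_integral_eq_lintegral_ofReal hint
    (ae_restrict_of_forall_mem measurableSet_Ioc fun t ht ↦ rpow_nonneg ht.1.le _),
    ← intervalIntegral.integral_of_le zero_le_one, integral_rpow (Or.inl (by norm_num))]
  norm_num

lemma setLIntegral_closedBall_le_exp_pi_mul_lintegral_gaussian {E : Type*}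
    [NormedAddCommGroup E] [MeasurableSpace E] [OpensMeasurableSpace E] (μ : Measure E)
    (f : E → ℝ≥0∞) {R : ℝ} (hR : 0 < R) :
    ∫⁻ ξ in closedBall 0 R, f ξ ∂μ
      ≤ ENNReal.ofReal (exp π)
        * ∫⁻ ξ, f ξ * ENNReal.ofReal (exp (-(π / R ^ 2) * ‖ξ‖ ^ 2)) ∂μ := by
  rw [← lintegral_const_mul' _ _ ENNReal.ofReal_ne_top]
  refine (setLIntegral_mono' measurableSet_closedBall fun ξ hξ ↦ ?_).trans
    (setLIntegral_le_lintegral _ _)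
  have hnorm : ‖ξ‖ ^ 2 ≤ R ^ 2 :=
    pow_le_pow_left₀ (norm_nonneg ξ) (mem_closedBall_zero_iff.1 hξ) 2
  have hone : 1 ≤ ENNReal.ofReal (exp π) * ENNReal.ofReal (exp (-(π / R ^ 2) * ‖ξ‖ ^ 2)) := by
    rw [← ENNReal.ofReal_mul (exp_nonneg _), ← exp_add, ← ENNReal.ofReal_one]
    refine ENNReal.ofReal_le_ofReal (one_le_exp ?_)
    rw [neg_mul, ← sub_eq_add_neg, sub_nonneg, div_mul_eq_mul_div, div_le_iff₀ (by positivity)]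
    gcongr
  exact (le_mul_of_one_le_left' hone).trans_eq (by ring)

section Frostman

variable {X : Type*} [PseudoMetricSpace X] [MeasurableSpace X] {μ : Measure X} {C s a : ℝ}

lemma measure_setOf_lt_exp_neg_mul_dist_sq_le (hC : 0 ≤ C) (hs : 0 < s) (ha : 0 < a)
    (hball : ∀ x (r : ℝ), 0 < r → μ (closedBall x r) ≤ ENNReal.ofReal (C * r ^ s))
    (x : X) {t : ℝ} (ht₀ : 0 < t) (ht₁ : t < 1) :
    μ {y | t < exp (-(a * dist x y ^ 2))}
      ≤ ENNReal.ofReal (C * (s / a) ^ (s / 2) * t ^ (-(1 / 2) : ℝ)) := by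
  set u := -log t with hu_def
  have hu : 0 < u := neg_pos.2 (log_neg ht₀ ht₁)
  set r := √(u / a) with hr_def
  have hsub : {y | t < exp (-(a * dist x y ^ 2))} ⊆ closedBall x r := by
    intro y hy
    have hlog : log t < -(a * dist x y ^ 2) := (log_lt_iff_lt_exp ht₀).2 hy
    rw [mem_closedBall, dist_comm]
    refine le_sqrt_of_sq_le ((le_div_iff₀ ha).2 ?_)
    linarith
  have hexp : exp (u / 2) = t ^ (-(1 / 2) : ℝ) := by
    rw [rpow_def_of_pos ht₀, hu_def]
    ring_nf
  have hrs : r ^ s = u ^ (s / 2) / a ^ (s / 2) := by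
    rw [hr_def, sqrt_eq_rpow, ← rpow_mul (by positivity), div_rpow hu.le ha.le]
    ring_nf
  have hus : u ^ (s / 2) ≤ s ^ (s / 2) * t ^ (-(1 / 2) : ℝ) := by
    simpa [hexp, mul_div_cancel₀] using rpow_le_mul_exp_div_two (half_pos hs) hu.le
  calc μ {y | t < exp (-(a * dist x y ^ 2))} ≤ μ (closedBall x r) := measure_mono hsub
    _ ≤ ENNReal.ofReal (C * r ^ s) := hball x r (sqrt_pos.2 (by positivity))
    _ ≤ ENNReal.ofReal (C * (s / a) ^ (s / 2) * t ^ (-(1 / 2) : ℝ)) := by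
      refine ENNReal.ofReal_le_ofReal ?_
      rw [hrs, div_rpow hs.le ha.le, mul_assoc, div_mul_eq_mul_div]
      gcongr

lemma lintegral_exp_neg_mul_dist_sq_le [OpensMeasurableSpace X] (hC : 0 ≤ C) (hs : 0 < s)
    (ha : 0 < a) (hball : ∀ x (r : ℝ), 0 < r → μ (closedBall x r) ≤ ENNReal.ofReal (C * r ^ s))
    (x : X) :
    ∫⁻ y, ENNReal.ofReal (exp (-(a * dist x y ^ 2))) ∂μ
      ≤ ENNReal.ofReal (2 * C * (s / a) ^ (s / 2)) := by
  set K := C * (s / a) ^ (s / 2) with hK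
  have hlevel : ∀ t ∈ Ioi (0 : ℝ), μ {y | t < exp (-(a * dist x y ^ 2))}
      ≤ (Ioc 0 1).indicator
          (fun t ↦ ENNReal.ofReal K * ENNReal.ofReal (t ^ (-(1 / 2) : ℝ))) t := by
    intro t ht
    rcases lt_or_ge t 1 with ht₁ | ht₁
    · rw [indicator_of_mem (show t ∈ Ioc 0 1 from ⟨ht, ht₁.le⟩),
        ← ENNReal.ofReal_mul (by positivity)]
      exact measure_setOf_lt_exp_neg_mul_dist_sq_le hC hs ha hball x ht ht₁
    · have hempty : {y | t < exp (-(a * dist x y ^ 2))} = ∅ :=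
        eq_empty_of_forall_notMem fun y hy ↦ (exp_le_one_iff.2 (by nlinarith)).not_gt
          (ht₁.trans_lt hy)
      simp [hempty]
  calc ∫⁻ y, ENNReal.ofReal (exp (-(a * dist x y ^ 2))) ∂μ
      = ∫⁻ t in Ioi 0, μ {y | t < exp (-(a * dist x y ^ 2))} :=
        lintegral_eq_lintegral_meas_lt μ (ae_of_all _ fun _ ↦ (exp_pos _).le) (by fun_prop)
    _ ≤ ∫⁻ t in Ioi 0, (Ioc 0 1).indicator
          (fun t ↦ ENNReal.ofReal K * ENNReal.ofReal (t ^ (-(1 / 2) : ℝ))) t :=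
        setLIntegral_mono' measurableSet_Ioi hlevel
    _ = ENNReal.ofReal K * ∫⁻ t in Ioc 0 1, ENNReal.ofReal (t ^ (-(1 / 2) : ℝ)) := by
      rw [lintegral_indicator measurableSet_Ioc, Measure.restrict_restrict measurableSet_Ioc,
        inter_eq_self_of_subset_left Ioc_subset_Ioi_self,
        lintegral_const_mul' _ _ ENNReal.ofReal_ne_top]
    _ = ENNReal.ofReal (2 * C * (s / a) ^ (s / 2)) := by
      rw [lintegral_Ioc_zero_one_rpow_neg_half, ← ENNReal.ofReal_ofNat 2,
        ← ENNReal.ofReal_mul (by positivity), hK]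
      ring_nf

end Frostman

section Gaussian

variable {V : Type*} [NormedAddCommGroup V] [InnerProductSpace ℝ V]

open ComplexConjugate in
lemma cexp_inner_mul_conj_cexp_inner (x y ξ : V) :
    Complex.exp (-(2 * π * ⟪x, ξ⟫) * Complex.I)
        * conj (Complex.exp (-(2 * π * ⟪y, ξ⟫) * Complex.I))
      = Complex.exp (-(2 * π * ⟪x - y, ξ⟫) * Complex.I) := by
  rw [← Complex.exp_conj, ← Complex.exp_add, inner_sub_left]
  simp only [map_mul, map_neg, Complex.conj_I, Complex.conj_ofReal, map_ofNat]
  push_cast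
  ring_nf

variable [FiniteDimensional ℝ V] [MeasurableSpace V] [BorelSpace V]

lemma integral_cexp_inner_mul_gaussian {R : ℝ} (hR : 0 < R) (w : V) :
    ∫ ξ : V, Complex.exp (-(2 * π * ⟪w, ξ⟫) * Complex.I) * Complex.exp (-(π / R ^ 2) * ‖ξ‖ ^ 2)
      = ((R ^ Module.finrank ℝ V * exp (-(π * R ^ 2 * ‖w‖ ^ 2)) : ℝ) : ℂ) := by
  have hb : 0 < ((π / R ^ 2 : ℝ) : ℂ).re := by rw [Complex.ofReal_re]; positivity
  have key := GaussianFourier.integral_cexp_neg_mul_sq_norm_add hb (-2 * π * Complex.I) w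
  have hpow : ((π : ℂ) / ((π / R ^ 2 : ℝ) : ℂ)) ^ ((Module.finrank ℝ V : ℂ) / 2)
      = ((R ^ Module.finrank ℝ V : ℝ) : ℂ) := by
    rw [← Complex.ofReal_div, ← Complex.ofReal_natCast, ← Complex.ofReal_ofNat,
      ← Complex.ofReal_div, ← Complex.ofReal_cpow (by positivity)]
    congr 1
    rw [div_div_cancel₀ pi_ne_zero, ← rpow_natCast R 2, ← rpow_mul hR.le, ← rpow_natCast]
    congr 1
    push_cast
    ring
  convert key using 2
  · ext ξ
    rw [← Complex.exp_add]
    push_cast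
    ring_nf
  · rw [hpow, Complex.ofReal_mul, Complex.ofReal_exp]
    congr 2
    push_cast
    field_simp
    simp only [Complex.I_sq]
    ring

end Gaussian

section FourierMeasure

variable {d : ℕ}

lemma fourierMeasure_eq_charFun (μ : Measure (EuclideanSpace ℝ (Fin d)))
    (ξ : EuclideanSpace ℝ (Fin d)) : fourierMeasure μ ξ = charFun μ (-(2 * π) • ξ) := by
  simp only [fourierMeasure, charFun_apply, inner_smul_right]
  congr 1 with x
  push_cast
  ring_nf

lemma norm_fourierMeasure_le (μ : Measure (EuclideanSpace ℝ (Fin d)))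
    (ξ : EuclideanSpace ℝ (Fin d)) : ‖fourierMeasure μ ξ‖ ≤ μ.real univ :=
  fourierMeasure_eq_charFun μ ξ ▸ norm_charFun_le _

lemma measurable_fourierMeasure (μ : Measure (EuclideanSpace ℝ (Fin d))) [SFinite μ] :
    Measurable (fourierMeasure μ) := by
  rw [funext (fourierMeasure_eq_charFun μ)]
  exact measurable_charFun.comp (measurable_const_smul _)

lemma ofReal_norm_fourierMeasure_sq (μ : Measure (EuclideanSpace ℝ (Fin d))) [SFinite μ]
    (ξ : EuclideanSpace ℝ (Fin d)) :
    ((‖fourierMeasure μ ξ‖ ^ 2 : ℝ) : ℂ)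
      = ∫ z, Complex.exp (-(2 * π * ⟪z.1 - z.2, ξ⟫) * Complex.I) ∂(μ.prod μ) := by
  rw [Complex.ofReal_pow, ← Complex.mul_conj', fourierMeasure, ← integral_conj,
    ← integral_prod_mul]
  simp only [cexp_inner_mul_conj_cexp_inner]

lemma integral_norm_fourierMeasure_sq_mul_gaussian (μ : Measure (EuclideanSpace ℝ (Fin d)))
    [IsFiniteMeasure μ] {R : ℝ} (hR : 0 < R) :
    ∫ ξ, ‖fourierMeasure μ ξ‖ ^ 2 * exp (-(π / R ^ 2) * ‖ξ‖ ^ 2)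
      = ∫ z, R ^ d * exp (-(π * R ^ 2 * ‖z.1 - z.2‖ ^ 2)) ∂(μ.prod μ) := by
  set G : EuclideanSpace ℝ (Fin d) → ℂ := fun ξ ↦ Complex.exp (-(π / R ^ 2) * ‖ξ‖ ^ 2)
  set F : EuclideanSpace ℝ (Fin d) → EuclideanSpace ℝ (Fin d) × EuclideanSpace ℝ (Fin d) → ℂ :=
    fun ξ z ↦ Complex.exp (-(2 * π * ⟪z.1 - z.2, ξ⟫) * Complex.I) * G ξ
  have hG : Integrable G := by
    have hb : 0 < ((π / R ^ 2 : ℝ) : ℂ).re := by rw [Complex.ofReal_re]; positivity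
    convert GaussianFourier.integrable_cexp_neg_mul_sq_norm_add hb 0
      (0 : EuclideanSpace ℝ (Fin d)) using 3
    simp
  have hF : Integrable (Function.uncurry F) (volume.prod (μ.prod μ)) := by
    refine (hG.mul_prod (integrable_const (1 : ℂ))).mono (by fun_prop)
      (ae_of_all _ fun ⟨ξ, z⟩ ↦ ?_)
    simp [F, Complex.norm_exp]
  apply Complex.ofReal_injective
  calc ((∫ ξ, ‖fourierMeasure μ ξ‖ ^ 2 * exp (-(π / R ^ 2) * ‖ξ‖ ^ 2) : ℝ) : ℂ)
      = ∫ ξ, ∫ z, F ξ z ∂(μ.prod μ) := by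
        rw [← integral_complex_ofReal]
        congr 1 with ξ
        rw [integral_mul_const, ← ofReal_norm_fourierMeasure_sq]
        push_cast
        rfl
    _ = ∫ z, (∫ ξ, F ξ z) ∂(μ.prod μ) := integral_integral_swap hF
    _ = _ := by
        rw [← integral_complex_ofReal]
        congr 1 with z
        simp only [F, G]
        rw [integral_cexp_inner_mul_gaussian hR, finrank_euclideanSpace_fin]

lemma lintegral_norm_fourierMeasure_sq_mul_gaussian (μ : Measure (EuclideanSpace ℝ (Fin d)))
    [IsFiniteMeasure μ] {R : ℝ} (hR : 0 < R) :
    ∫⁻ ξ, (‖fourierMeasure μ ξ‖₊ : ℝ≥0∞) ^ 2 * ENNReal.ofReal (exp (-(π / R ^ 2) * ‖ξ‖ ^ 2))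
      = ∫⁻ x, ∫⁻ y, ENNReal.ofReal (R ^ d * exp (-(π * R ^ 2 * ‖x - y‖ ^ 2))) ∂μ ∂μ := by
  have hG : Integrable fun ξ : EuclideanSpace ℝ (Fin d) ↦ exp (-(π / R ^ 2) * ‖ξ‖ ^ 2) :=
    Integrable.of_integral_ne_zero <| by
      rw [GaussianFourier.integral_rexp_neg_mul_sq_norm (by positivity)]
      positivity
  have hξ : Integrable fun ξ ↦ ‖fourierMeasure μ ξ‖ ^ 2 * exp (-(π / R ^ 2) * ‖ξ‖ ^ 2) :=
    hG.bdd_mul (c := μ.real univ ^ 2)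
      ((measurable_fourierMeasure μ).norm.pow_const 2).aestronglyMeasurable
      (ae_of_all _ fun ξ ↦ by
        rw [norm_pow, norm_norm]
        exact pow_le_pow_left₀ (norm_nonneg _) (norm_fourierMeasure_le μ ξ) 2)
  have hz : Integrable (fun z : EuclideanSpace ℝ (Fin d) × EuclideanSpace ℝ (Fin d) ↦
      R ^ d * exp (-(π * R ^ 2 * ‖z.1 - z.2‖ ^ 2))) (μ.prod μ) := by
    refine .of_bound (by fun_prop) (R ^ d) (ae_of_all _ fun z ↦ ?_)
    rw [norm_of_nonneg (by positivity)]
    exact mul_le_of_le_one_right (by positivity)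
      (exp_le_one_iff.2 (neg_nonpos.2 (by positivity)))
  calc ∫⁻ ξ, (‖fourierMeasure μ ξ‖₊ : ℝ≥0∞) ^ 2 * ENNReal.ofReal (exp (-(π / R ^ 2) * ‖ξ‖ ^ 2))
      = ENNReal.ofReal (∫ ξ, ‖fourierMeasure μ ξ‖ ^ 2 * exp (-(π / R ^ 2) * ‖ξ‖ ^ 2)) := by
        rw [ofReal_integral_eq_lintegral_ofReal hξ (ae_of_all _ fun ξ ↦ by positivity)]
        congr 1 with ξ
        rw [ENNReal.ofReal_mul (by positivity), ENNReal.ofReal_pow (norm_nonneg _), ofReal_norm,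
          enorm_eq_nnnorm]
    _ = ENNReal.ofReal (∫ z, R ^ d * exp (-(π * R ^ 2 * ‖z.1 - z.2‖ ^ 2)) ∂(μ.prod μ)) := by
        rw [integral_norm_fourierMeasure_sq_mul_gaussian μ hR]
    _ = ∫⁻ x, ∫⁻ y, ENNReal.ofReal (R ^ d * exp (-(π * R ^ 2 * ‖x - y‖ ^ 2))) ∂μ ∂μ := by
        rw [ofReal_integral_eq_lintegral_ofReal hz (ae_of_all _ fun z ↦ by positivity),
          lintegral_prod _ (by fun_prop)]

lemma lintegral_norm_fourierMeasure_sq_mul_gaussian_le (μ : Measure (EuclideanSpace ℝ (Fin d)))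
    [IsFiniteMeasure μ] {C s : ℝ} (hC : 0 ≤ C) (hs : 0 < s)
    (hball : ∀ (x : EuclideanSpace ℝ (Fin d)) (r : ℝ), 0 < r →
      μ (closedBall x r) ≤ ENNReal.ofReal (C * r ^ s))
    {R : ℝ} (hR : 0 < R) :
    ∫⁻ ξ, (‖fourierMeasure μ ξ‖₊ : ℝ≥0∞) ^ 2 * ENNReal.ofReal (exp (-(π / R ^ 2) * ‖ξ‖ ^ 2))
      ≤ ENNReal.ofReal (2 * C * (s / π) ^ (s / 2) * R ^ ((d : ℝ) - s)) * μ univ := by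
  have hscale : R ^ d * (2 * C * (s / (π * R ^ 2)) ^ (s / 2))
      = 2 * C * (s / π) ^ (s / 2) * R ^ ((d : ℝ) - s) := by
    rw [← div_div, div_rpow (by positivity) (by positivity), ← rpow_natCast R 2,
      ← rpow_mul hR.le, rpow_sub hR, rpow_natCast]
    field_simp
    ring_nf
  have hinner : ∀ x, ∫⁻ y, ENNReal.ofReal (R ^ d * exp (-(π * R ^ 2 * ‖x - y‖ ^ 2))) ∂μ
      ≤ ENNReal.ofReal (2 * C * (s / π) ^ (s / 2) * R ^ ((d : ℝ) - s)) := fun x ↦ by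
    simp_rw [ENNReal.ofReal_mul (by positivity : (0 : ℝ) ≤ R ^ d)]
    rw [lintegral_const_mul' _ _ ENNReal.ofReal_ne_top, ← hscale,
      ENNReal.ofReal_mul (by positivity)]
    gcongr
    simpa only [dist_eq_norm] using
      lintegral_exp_neg_mul_dist_sq_le hC hs (by positivity) hball x
  rw [lintegral_norm_fourierMeasure_sq_mul_gaussian μ hR]
  exact (lintegral_mono hinner).trans_eq (lintegral_const _)

end FourierMeasure

theorem energy_ball_fourier_bound_general
    (d : ℕ)
    (μ : Measure (EuclideanSpace ℝ (Fin d))) [IsProbabilityMeasure μ]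
    (C s : ℝ) (hC : 0 < C) (hs₀ : 0 < s)
    (hball : ∀ (x : EuclideanSpace ℝ (Fin d)) (r : ℝ), 0 < r →
      μ (closedBall x r) ≤ ENNReal.ofReal (C * r ^ s)) :
    ∃ C' : ℝ, 0 < C' ∧ ∀ R : ℝ, 1 ≤ R →
      ∫⁻ ξ in closedBall (0 : EuclideanSpace ℝ (Fin d)) R, ‖fourierMeasure μ ξ‖₊ ^ 2 ∂volume
        ≤ ENNReal.ofReal (C' * R ^ ((d : ℝ) - s)) := by
  refine ⟨exp π * (2 * C * (s / π) ^ (s / 2)), by positivity, fun R hR ↦ ?_⟩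
  have hR₀ : 0 < R := one_pos.trans_le hR
  calc ∫⁻ ξ in closedBall (0 : EuclideanSpace ℝ (Fin d)) R, ‖fourierMeasure μ ξ‖₊ ^ 2 ∂volume
      ≤ ENNReal.ofReal (exp π) * ∫⁻ ξ, (‖fourierMeasure μ ξ‖₊ : ℝ≥0∞) ^ 2
          * ENNReal.ofReal (exp (-(π / R ^ 2) * ‖ξ‖ ^ 2)) :=
        setLIntegral_closedBall_le_exp_pi_mul_lintegral_gaussian _ _ hR₀
    _ ≤ ENNReal.ofReal (exp π)
          * ENNReal.ofReal (2 * C * (s / π) ^ (s / 2) * R ^ ((d : ℝ) - s)) := by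
        gcongr
        simpa only [measure_univ, mul_one] using
          lintegral_norm_fourierMeasure_sq_mul_gaussian_le μ hC.le hs₀ hball hR₀
    _ = ENNReal.ofReal (exp π * (2 * C * (s / π) ^ (s / 2)) * R ^ ((d : ℝ) - s)) := by
        rw [← ENNReal.ofReal_mul (exp_nonneg π)]
        ring_nf

/-- Let `μ` be a compactly supported Borel probability measure on `ℝ^d`
with `μ(B(x,r)) ≤ C r^s`, `0 < s ≤ d`. Then there is a constant `C'` such that for every
`R ≥ 1`, `∫_{|ξ| ≤ R} |μ̂(ξ)|² dξ ≤ C' R^{d-s}`. -/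
theorem energy_ball_fourier_bound
    (d : ℕ) (hd : 1 ≤ d)
    (μ : Measure (EuclideanSpace ℝ (Fin d))) [IsProbabilityMeasure μ]
    (hμc : ∃ K : Set (EuclideanSpace ℝ (Fin d)), IsCompact K ∧ μ Kᶜ = 0)
    (C s : ℝ) (hC : 0 < C) (hs₀ : 0 < s) (hsd : s ≤ d)
    (hball : ∀ (x : EuclideanSpace ℝ (Fin d)) (r : ℝ), 0 < r →
      μ (closedBall x r) ≤ ENNReal.ofReal (C * r ^ s)) :
    ∃ C' : ℝ, 0 < C' ∧ ∀ R : ℝ, 1 ≤ R →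
      ∫⁻ ξ in closedBall (0 : EuclideanSpace ℝ (Fin d)) R, ‖fourierMeasure μ ξ‖₊ ^ 2 ∂volume
        ≤ ENNReal.ofReal (C' * R ^ ((d : ℝ) - s)) :=
  energy_ball_fourier_bound_general d μ C s hC hs₀ hball
end
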